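/- Let γ ∈ (0,1), let T ≥ 1 be a natural number (the number of attributes), and set α = γ/T. Let F > 0 (the frequency of records whose attribute p takes value a). Let Q be a nonempty finite index set (the attributes q ≠ p), and for each q ∈ Q let k_q ≥ 1 and let f_{q,1}, …, f_{q,k_q} be positive reals with Σ_{b=1}^{k_q} f_{q,b} = F. On a probability space (Ω, ℙ), let (D_{q,b}) (for q ∈ Q, 1 ≤ b ≤ k_q) be a mutually independent family of random variables with D_{q,b} uniformly distributed on [0, 2·α·f_{q,b}]. Then for every τ with 0 < τ ≤ min_{q,b} 2·α·f_{q,b}, the column-wise attack confidence Conf_col := ℙ(∃ (q,b), D_{q,b} ≥ τ) satisfies Conf_col = 1 − ∏_{q∈Q} ∏_{b=1}^{k_q} τ/(2·α·f_{q,b}) ≤ 1 − ∏_{q∈Q} (τ·k_q/(2·α·F))^{k_q}, and consequently the confidence gain G := Conf_col/(α·F) over the random-flipping confidence Conf_rnd = α·F satisfies G ≤ (1 − ∏_{q∈Q} (τ·k_q/(2·α·F))^{k_q}) / (α·F). -/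

import Mathlib

/-!
The complement of the attack event is the intersection of the independent events
`D (q, b) < τ`, and each of them has probability `τ / (2 α f q b)` because `τ` lies in the
support `[0, 2 α f q b]` of the uniform law. For each attribute `q` the widths `2 α f q b`
sum to `2 α F`, so AM–GM bounds their product by `(2 α F / k q) ^ k q`, that is,
`∏ b, τ / (2 α f q b) ≥ (τ k q / (2 α F)) ^ k q`.
-/

open MeasureTheory ProbabilityTheory Finset

theorem Real.prod_le_arith_mean_pow {ι : Type*} (s : Finset ι) (z : ι → ℝ)
    (hz : ∀ i ∈ s, 0 ≤ z i) : ∏ i ∈ s, z i ≤ ((∑ i ∈ s, z i) / #s) ^ #s := by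
  rcases s.eq_empty_or_nonempty with rfl | hs
  · simp
  have hn : (0 : ℝ) < #s := by exact_mod_cast hs.card_pos
  have hgm : ∏ i ∈ s, z i ^ (#s : ℝ)⁻¹ ≤ (∑ i ∈ s, z i) / #s := by
    convert Real.geom_mean_le_arith_mean_weighted s (fun _ ↦ (#s : ℝ)⁻¹) z
      (fun _ _ ↦ by positivity) (by simp [hn.ne']) hz using 1
    rw [← mul_sum, div_eq_inv_mul]
  calc ∏ i ∈ s, z i = (∏ i ∈ s, z i ^ (#s : ℝ)⁻¹) ^ #s := by
        rw [← prod_pow]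
        refine prod_congr rfl fun i hi ↦ ?_
        rw [← Real.rpow_natCast, ← Real.rpow_mul (hz i hi), inv_mul_cancel₀ hn.ne',
          Real.rpow_one]
    _ ≤ _ := pow_le_pow_left₀ (prod_nonneg fun i hi ↦ Real.rpow_nonneg (hz i hi) _) hgm _

theorem pow_mul_card_div_sum_le_prod_div {ι : Type*} (s : Finset ι) {c : ι → ℝ}
    (hc : ∀ i ∈ s, 0 < c i) {t : ℝ} (ht : 0 ≤ t) :
    (t * #s / ∑ i ∈ s, c i) ^ #s ≤ ∏ i ∈ s, t / c i := by
  rw [← div_div_eq_mul_div, div_pow, prod_div_distrib, prod_const]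
  exact div_le_div_of_nonneg_left (by positivity) (prod_pos hc)
    (Real.prod_le_arith_mean_pow s c fun i hi ↦ (hc i hi).le)

theorem measureReal_preimage_Iio_of_isUniform_Icc {Ω : Type*} [MeasurableSpace Ω]
    {μ : Measure Ω} {X : Ω → ℝ} {c t : ℝ} (hX : pdf.IsUniform X (Set.Icc 0 c) μ)
    (ht : 0 < t) (htc : t ≤ c) : μ.real (X ⁻¹' Set.Iio t) = t / c := by
  have hc : 0 < c := ht.trans_le htc
  have hIcc : Set.Icc 0 c ∩ Set.Iio t = Set.Ico 0 t := by
    ext x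
    simp only [Set.mem_inter_iff, Set.mem_Icc, Set.mem_Iio, Set.mem_Ico]
    constructor
    · rintro ⟨⟨h0, -⟩, hxt⟩; exact ⟨h0, hxt⟩
    · rintro ⟨h0, hxt⟩; exact ⟨⟨h0, hxt.le.trans htc⟩, hxt⟩
  rw [measureReal_def, hX.measure_preimage (by simp [hc]) (by simp) measurableSet_Iio, hIcc,
    Real.volume_Ico, Real.volume_Icc, sub_zero, sub_zero, ← ENNReal.ofReal_div_of_pos hc,
    ENNReal.toReal_ofReal (div_nonneg ht.le hc.le)]

theorem ProbabilityTheory.iIndepFun.measureReal_exists_le_eq {Ω ι : Type*} [MeasurableSpace Ω]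
    {μ : Measure Ω} [IsProbabilityMeasure μ] [Fintype ι] {X : ι → Ω → ℝ} (hX : ∀ i, Measurable (X i))
    (hind : iIndepFun X μ) (t : ℝ) :
    μ.real {ω | ∃ i, t ≤ X i ω} = 1 - ∏ i, μ.real (X i ⁻¹' Set.Iio t) := by
  have hcompl : {ω | ∃ i, t ≤ X i ω} = (⋂ i, X i ⁻¹' Set.Iio t)ᶜ := by
    ext ω; simp
  rw [hcompl, probReal_compl_eq_one_sub (.iInter fun i ↦ hX i measurableSet_Iio),
    measureReal_def, hind.meas_iInter fun i ↦ ⟨_, measurableSet_Iio, rfl⟩, ENNReal.toReal_prod]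
  rfl

theorem column_wise_attack_confidence_gain_general
    {Ω : Type*} [MeasurableSpace Ω] (μ : Measure Ω) [IsProbabilityMeasure μ]
    (γ : ℝ) (hγ : γ ∈ Set.Ioo (0 : ℝ) 1)
    (T : ℕ) (hT : 1 ≤ T) (α : ℝ) (hα : α = γ / T)
    (F : ℝ) (hF : 0 < F)
    {ι : Type*} [Fintype ι]
    (k : ι → ℕ)
    (f : (q : ι) → Fin (k q) → ℝ)
    (hsum : ∀ q, ∑ b, f q b = F)
    (D : (Σ q : ι, Fin (k q)) → Ω → ℝ)
    (hmeas : ∀ p, Measurable (D p))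
    (hunif : ∀ p : Σ q : ι, Fin (k q), Measure.map (D p) μ
      = (ENNReal.ofReal (2 * α * f p.1 p.2))⁻¹
          • volume.restrict (Set.Icc 0 (2 * α * f p.1 p.2)))
    (hindep : iIndepFun D μ)
    (τ : ℝ) (hτ0 : 0 < τ) (hτ : ∀ p : Σ q : ι, Fin (k q), τ ≤ 2 * α * f p.1 p.2) :
    (μ {ω | ∃ p : Σ q : ι, Fin (k q), τ ≤ D p ω}).toReal
        = 1 - ∏ q, ∏ b, τ / (2 * α * f q b) ∧
      (μ {ω | ∃ p : Σ q : ι, Fin (k q), τ ≤ D p ω}).toReal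
        ≤ 1 - ∏ q : ι, (τ * k q / (2 * α * F)) ^ (k q) ∧
      (μ {ω | ∃ p : Σ q : ι, Fin (k q), τ ≤ D p ω}).toReal / (α * F)
        ≤ (1 - ∏ q : ι, (τ * k q / (2 * α * F)) ^ (k q)) / (α * F) := by
  have hα0 : 0 < α := hα ▸ div_pos hγ.1 (by exact_mod_cast hT)
  have hconf : μ.real {ω | ∃ p : Σ q : ι, Fin (k q), τ ≤ D p ω}
      = 1 - ∏ q, ∏ b, τ / (2 * α * f q b) := by
    rw [hindep.measureReal_exists_le_eq hmeas, ← univ_sigma_univ, prod_sigma]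
    congr! 3 with q - b -
    refine measureReal_preimage_Iio_of_isUniform_Icc ?_ hτ0 (hτ ⟨q, b⟩)
    rw [pdf.IsUniform, ProbabilityTheory.cond, Real.volume_Icc, sub_zero]
    exact hunif ⟨q, b⟩
  have hamgm : ∀ q, (τ * k q / (2 * α * F)) ^ (k q) ≤ ∏ b, τ / (2 * α * f q b) := fun q ↦ by
    simpa [← mul_sum, hsum] using
      pow_mul_card_div_sum_le_prod_div univ (fun b _ ↦ hτ0.trans_le (hτ ⟨q, b⟩)) hτ0.le
  have hbound : μ.real {ω | ∃ p : Σ q : ι, Fin (k q), τ ≤ D p ω}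
      ≤ 1 - ∏ q : ι, (τ * k q / (2 * α * F)) ^ (k q) := by
    rw [hconf]
    gcongr with q
    exact hamgm q
  exact ⟨hconf, hbound, div_le_div_of_nonneg_right hbound (by positivity)⟩

/-- Proposition 1 (column-wise correlation attack confidence): modeling the
deviations `D (q,b)` as independent uniform random variables on
`[0, 2·α·f q b]` with `α = γ/T`, `Σ_b f q b = F`, the attack confidence
`Conf_col = ℙ(∃ (q,b), D (q,b) ≥ τ)` equals `1 − ∏_q ∏_b τ/(2·α·f q b)`, is
bounded by `1 − ∏_q (τ·k_q/(2·α·F))^{k_q}` (AM–GM), and hence the confidence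
gain `Conf_col/(α·F)` over the random-flipping confidence `α·F` is bounded by
`(1 − ∏_q (τ·k_q/(2·α·F))^{k_q})/(α·F)`. -/
theorem column_wise_attack_confidence_gain
    {Ω : Type*} [MeasurableSpace Ω] (μ : Measure Ω) [IsProbabilityMeasure μ]
    (γ : ℝ) (hγ : γ ∈ Set.Ioo (0 : ℝ) 1)
    (T : ℕ) (hT : 1 ≤ T) (α : ℝ) (hα : α = γ / T)
    (F : ℝ) (hF : 0 < F)
    {ι : Type*} [Fintype ι] [Nonempty ι]
    (k : ι → ℕ) (hk : ∀ q, 1 ≤ k q)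
    (f : (q : ι) → Fin (k q) → ℝ) (hf : ∀ q b, 0 < f q b)
    (hsum : ∀ q, ∑ b, f q b = F)
    (D : (Σ q : ι, Fin (k q)) → Ω → ℝ)
    (hmeas : ∀ p, Measurable (D p))
    (hunif : ∀ p : Σ q : ι, Fin (k q), Measure.map (D p) μ
      = (ENNReal.ofReal (2 * α * f p.1 p.2))⁻¹
          • volume.restrict (Set.Icc 0 (2 * α * f p.1 p.2)))
    (hindep : iIndepFun D μ)
    (τ : ℝ) (hτ0 : 0 < τ) (hτ : ∀ p : Σ q : ι, Fin (k q), τ ≤ 2 * α * f p.1 p.2) :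
    (μ {ω | ∃ p : Σ q : ι, Fin (k q), τ ≤ D p ω}).toReal
        = 1 - ∏ q, ∏ b, τ / (2 * α * f q b) ∧
      (μ {ω | ∃ p : Σ q : ι, Fin (k q), τ ≤ D p ω}).toReal
        ≤ 1 - ∏ q : ι, (τ * k q / (2 * α * F)) ^ (k q) ∧
      (μ {ω | ∃ p : Σ q : ι, Fin (k q), τ ≤ D p ω}).toReal / (α * F)
        ≤ (1 - ∏ q : ι, (τ * k q / (2 * α * F)) ^ (k q)) / (α * F) :=
  column_wise_attack_confidence_gain_general μ γ hγ T hT α hα F hF k f hsum D hmeas hunif hindep τ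
    hτ0 hτ
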